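/- arXiv:1308.1572 — 3 statements merged into one kernel-verified Lean document; each statement's English description precedes it below -/
import Mathlib

section
/- For a prime p ≠ 3, the field ℚ₃ of 3-adic numbers contains a cube root of p if and only if p ≡ ±1 (mod 9). -/
/-!
A cube root of an integer `n` lies in `ℤ₃`, so `n` is a cube modulo 9, and the cubes modulo 9 are
`0, ±1`. Conversely, if `n = ±1 + 9k` then `a = ±1 + 3k` is a unit with `a³ ≡ n (mod 27)`, and
since `‖3a²‖² = 1/9`, Hensel's lemma lifts `a` to an exact cube root.
-/

open Polynomial

namespace PadicInt

variable {p : ℕ} [Fact p.Prime]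

theorem exists_pow_eq_of_norm_sub_lt {m : ℕ} {a c : ℤ_[p]}
    (h : ‖a ^ m - c‖ < ‖(m : ℤ_[p]) * a ^ (m - 1)‖ ^ 2) : ∃ z : ℤ_[p], z ^ m = c := by
  obtain ⟨z, hz, -⟩ := hensels_lemma (F := X ^ m - C c) (a := a)
    (by convert h using 2 <;> simp [derivative_X_pow])
  exact ⟨z, sub_eq_zero.mp (by simpa using hz)⟩

theorem norm_three : ‖(3 : ℤ_[3])‖ = 3⁻¹ := by
  simpa using norm_p (p := 3)

theorem exists_cube_eq_of_eq_add_nine_mul {ε k c : ℤ_[3]} (hε : ε ^ 2 = 1)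
    (hc : c = ε + 9 * k) : ∃ z : ℤ_[3], z ^ 3 = c := by
  have hε_norm : ‖ε‖ = 1 := by
    have := congrArg norm hε
    rwa [norm_pow, norm_one, pow_eq_one_iff_of_nonneg (norm_nonneg ε) two_ne_zero] at this
  have h3k : ‖3 * k‖ < ‖ε‖ := by
    rw [hε_norm, norm_mul, norm_three]
    nlinarith [norm_le_one k, norm_nonneg k]
  have ha : ‖ε + 3 * k‖ = 1 := by
    rw [IsUltrametricDist.norm_add_eq_max_of_norm_ne_norm h3k.ne', max_eq_left h3k.le, hε_norm]
  have hdiff : (ε + 3 * k) ^ 3 - c = 3 ^ 3 * (ε * k ^ 2 + k ^ 3) := by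
    rw [hc]
    linear_combination (ε + 9 * k) * hε
  apply exists_pow_eq_of_norm_sub_lt (a := ε + 3 * k)
  calc ‖(ε + 3 * k) ^ 3 - c‖ ≤ ‖(3 : ℤ_[3])‖ ^ 3 := by
        rw [hdiff, norm_mul, norm_pow]
        exact mul_le_of_le_one_right (by positivity) (norm_le_one _)
    _ < ‖((3 : ℕ) : ℤ_[3]) * (ε + 3 * k) ^ (3 - 1)‖ ^ 2 := by
        rw [Nat.cast_ofNat, norm_mul, norm_pow, ha, norm_three]
        norm_num

end PadicInt

namespace Padic

variable {p : ℕ} [Fact p.Prime]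

theorem exists_zmod_pow_eq_natCast_of_pow_eq {m n : ℕ} (hm : m ≠ 0) {x : ℚ_[p]}
    (hx : x ^ m = n) (k : ℕ) : ∃ y : ZMod (p ^ k), y ^ m = n := by
  have hx_le : ‖x‖ ≤ 1 := by
    rw [← pow_le_one_iff_of_nonneg (norm_nonneg x) hm, ← norm_pow, hx]
    exact_mod_cast norm_int_le_one (n : ℤ)
  obtain ⟨X, rfl⟩ : ∃ X : ℤ_[p], (X : ℚ_[p]) = x := ⟨⟨x, hx_le⟩, rfl⟩
  have hX : X ^ m = n := Subtype.ext (by simpa using hx)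
  exact ⟨PadicInt.toZModPow k X, by rw [← map_pow, hX, map_natCast]⟩

end Padic

theorem ZMod.cube_eq_one_or_neg_one_of_ne_zero_nine (y : ZMod 9) (hy : y ^ 3 ≠ 0) :
    y ^ 3 = 1 ∨ y ^ 3 = -1 := by
  revert y
  decide

/-- For a prime `p ≠ 3`, the field `ℚ₃` contains a cube root of `p` iff `p ≡ ±1 (mod 9)`. -/
theorem stmt_2 (p : ℕ) (hp : p.Prime) (hp3 : p ≠ 3) :
    (∃ x : ℚ_[3], x ^ 3 = (p : ℚ_[3])) ↔ ((p : ZMod 9) = 1 ∨ (p : ZMod 9) = -1) := by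
  constructor
  · rintro ⟨x, hx⟩
    obtain ⟨y, hy⟩ := Padic.exists_zmod_pow_eq_natCast_of_pow_eq three_ne_zero hx 2
    have hp9 : (p : ZMod 9) ≠ 0 := by
      rw [Ne, ZMod.natCast_eq_zero_iff]
      intro h9
      exact hp3 ((Nat.prime_dvd_prime_iff_eq Nat.prime_three hp).mp (dvd_trans ⟨3, rfl⟩ h9)).symm
    exact hy ▸ ZMod.cube_eq_one_or_neg_one_of_ne_zero_nine y (hy ▸ hp9)
  · intro h
    obtain ⟨ε, hε, hpε⟩ : ∃ ε : ℤ, ε ^ 2 = 1 ∧ ((p : ℤ) : ZMod 9) = ε := by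
      rcases h with h | h
      exacts [⟨1, by norm_num, by simp [h]⟩, ⟨-1, by norm_num, by simp [h]⟩]
    obtain ⟨k, hk⟩ := (ZMod.intCast_eq_intCast_iff_dvd_sub ε p 9).mp hpε.symm
    obtain ⟨z, hz⟩ := PadicInt.exists_cube_eq_of_eq_add_nine_mul (ε := ε) (k := k) (c := p)
      (by exact_mod_cast hε) (by rw [sub_eq_iff_eq_add'] at hk; exact_mod_cast hk)
    exact ⟨z, by rw [← PadicInt.coe_pow, hz, PadicInt.coe_natCast]⟩
end

section
/- For a prime p ≠ 3 with p ≢ ±1 (mod 9), the prime 3 is totally ramified in the field ℚ(∛p). -/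
/-!
Put `b = ∛p - p`. It is a root of `(X + p)³ - p = X³ + 3pX² + 3p²X + (p³ - p)`, which is
Eisenstein at `3` precisely when `9 ∤ p³ - p`, i.e. when `p ≢ 0, ±1 (mod 9)`.
If `x` is a root of a monic Eisenstein polynomial of degree `n` at a maximal ideal `(q)` and `P`
is a prime over `q`, then `x ∈ P`, and `q ∈ P^k` forces the constant term `c·q`, hence `q`
itself, into `P^(k+1)`; so `q ∈ P^n`. In a number field of degree `n`, comparing absolute norms
shows `q ∉ P^(n+1)`, so the ramification index is `n = 3`.
-/

open Polynomial Ideal NumberField IntermediateField Module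

namespace Polynomial

variable {A R : Type*} [CommRing A] [CommRing R] [Algebra A R] {f : A[X]} {P : Ideal R} {x : R}

theorem IsWeaklyEisensteinAt.mem_of_aeval_eq_zero {𝓟 : Ideal A} (hf : f.IsWeaklyEisensteinAt 𝓟)
    (hmo : f.Monic) [P.IsPrime] (hx : aeval x f = 0) (h𝓟 : 𝓟.map (algebraMap A R) ≤ P) :
    x ∈ P :=
  ‹P.IsPrime›.mem_of_pow_mem _ <| h𝓟 <|
    hf.pow_natDegree_le_of_aeval_zero_of_monic_mem_map hx hmo _ le_rfl

variable {q : A}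

theorem IsWeaklyEisensteinAt.algebraMap_coeff_zero_mem_pow_succ
    (hf : f.IsWeaklyEisensteinAt (span {q})) (hmo : f.Monic) (hx : aeval x f = 0) (hxP : x ∈ P)
    {k : ℕ} (hk : k < f.natDegree) (hqk : algebraMap A R q ∈ P ^ k) :
    algebraMap A R (f.coeff 0) ∈ P ^ (k + 1) := by
  rw [aeval_eq_sum_range, Finset.sum_range_succ', pow_zero, Algebra.smul_def, mul_one,
    add_eq_zero_iff_neg_eq'] at hx
  rw [← neg_mem_iff, hx]
  refine Ideal.sum_mem _ fun i hi => ?_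
  obtain hin | hin : i + 1 < f.natDegree ∨ i + 1 = f.natDegree := by
    have := Finset.mem_range.mp hi
    omega
  · obtain ⟨c, hc⟩ := mem_span_singleton'.mp (hf.mem hin)
    rw [← hc, Algebra.smul_def, map_mul, pow_succ, pow_succ, ← mul_assoc]
    exact mul_mem_mul (mul_mem_right _ _ (mul_mem_left _ _ hqk)) hxP
  · rw [hin, hmo.coeff_natDegree, one_smul]
    exact pow_le_pow_right hk (pow_mem_pow hxP _)

namespace IsEisensteinAt

theorem exists_coeff_zero_eq_mul_notMem (hf : f.IsEisensteinAt (span {q}))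
    (hn : 0 < f.natDegree) : ∃ c ∉ span {q}, c * q = f.coeff 0 := by
  obtain ⟨c, hc⟩ := mem_span_singleton'.mp (hf.mem hn)
  refine ⟨c, fun hcq => hf.notMem ?_, hc⟩
  obtain ⟨d, rfl⟩ := mem_span_singleton'.mp hcq
  rw [span_singleton_pow, ← hc, mem_span_singleton']
  exact ⟨d, by ring⟩

theorem algebraMap_mem_pow_natDegree (hq : (span {q}).IsMaximal) (hf : f.IsEisensteinAt (span {q}))
    (hmo : f.Monic) [P.IsPrime] (hx : aeval x f = 0) (hqP : algebraMap A R q ∈ P) :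
    algebraMap A R q ∈ P ^ f.natDegree := by
  rcases Nat.eq_zero_or_pos f.natDegree with hn | hn
  · simp [hn]
  have hxP : x ∈ P := hf.isWeaklyEisensteinAt.mem_of_aeval_eq_zero hmo hx <| by
    rwa [map_span, Set.image_singleton, span_le, Set.singleton_subset_iff]
  obtain ⟨c, hc, hcq⟩ := hf.exists_coeff_zero_eq_mul_notMem hn
  -- `c` is a unit mod `q`, so `q = u·(c·q) + v·q²` with both terms gaining a power of `P`.
  obtain ⟨u, _, hv, huv⟩ := hq.exists_inv hc
  obtain ⟨v, rfl⟩ := mem_span_singleton'.mp hv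
  have hq_eq : algebraMap A R q =
      algebraMap A R u * algebraMap A R (f.coeff 0) +
        algebraMap A R v * (algebraMap A R q * algebraMap A R q) := by
    simp only [← map_mul, ← map_add, ← hcq]
    congr 1
    linear_combination (-q) * huv
  suffices ∀ k, 1 ≤ k → k ≤ f.natDegree → algebraMap A R q ∈ P ^ k from this _ hn le_rfl
  intro k hk
  induction k, hk using Nat.le_induction with
  | base => intro _; simpa using hqP
  | succ k _ ih =>
    intro hkn
    have hqk := ih (by omega)
    rw [hq_eq]
    refine add_mem (mul_mem_left _ _ ?_) (mul_mem_left _ _ ?_)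
    · exact hf.isWeaklyEisensteinAt.algebraMap_coeff_zero_mem_pow_succ hmo hx hxP hkn hqk
    · rw [pow_succ]; exact mul_mem_mul hqk hqP

end IsEisensteinAt

end Polynomial

theorem NumberField.natCast_notMem_pow_finrank_succ {K : Type*} [Field K] [NumberField K]
    {q : ℕ} (hq : q.Prime) {P : Ideal (𝓞 K)} (hP : P ≠ ⊤) :
    (q : 𝓞 K) ∉ P ^ (finrank ℚ K + 1) := by
  intro hmem
  have hdvd := absNorm_dvd_absNorm_of_le ((span_singleton_le_iff_mem _).mpr hmem)
  rw [map_pow, absNorm_span_natCast, RingOfIntegers.rank] at hdvd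
  obtain ⟨m, -, hm⟩ := (Nat.dvd_prime_pow hq).mp ((dvd_pow_self _ (Nat.succ_ne_zero _)).trans hdvd)
  have hm0 : m ≠ 0 := by
    rintro rfl
    exact hP (absNorm_eq_one_iff.mp (by simpa using hm))
  rw [hm, ← pow_mul] at hdvd
  have := (Nat.pow_dvd_pow_iff_le_right hq.one_lt).mp hdvd
  nlinarith [Nat.one_le_iff_ne_zero.mpr hm0]

theorem NumberField.ramificationIdx'_eq_finrank {K : Type*} [Field K] [NumberField K]
    {q : ℕ} (hq : q.Prime) {P : Ideal (𝓞 K)} (hP : P ≠ ⊤) (h : (q : 𝓞 K) ∈ P ^ finrank ℚ K) :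
    ramificationIdx' (span {(q : ℤ)}) P = finrank ℚ K := by
  have hmap : (span {(q : ℤ)}).map (algebraMap ℤ (𝓞 K)) = span {(q : 𝓞 K)} := by
    rw [map_span, Set.image_singleton, map_natCast]
  apply ramificationIdx'_spec
  · rwa [hmap, span_singleton_le_iff_mem]
  · rw [hmap, span_singleton_le_iff_mem]
    exact natCast_notMem_pow_finrank_succ hq hP

theorem Polynomial.Monic.taylor {R : Type*} [CommRing R] {f : R[X]} (hf : f.Monic) (r : R) :
    (taylor r f).Monic := by
  rwa [Monic, leadingCoeff_taylor]

theorem Polynomial.taylor_X_pow_three_sub_C {R : Type*} [CommRing R] (p : R) :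
    taylor p (X ^ 3 - C p) = X ^ 3 + C (3 * p) * X ^ 2 + C (3 * p ^ 2) * X + C (p ^ 3 - p) := by
  simp only [map_sub, taylor_X_pow, taylor_C, map_mul, map_pow, map_ofNat]
  ring

theorem Int.three_dvd_pow_three_sub_self (p : ℤ) : 3 ∣ p ^ 3 - p := by
  have h : ((p ^ 3 - p : ℤ) : ZMod 3) = 0 := by
    push_cast
    rw [ZMod.pow_card, sub_self]
  exact_mod_cast (ZMod.intCast_zmod_eq_zero_iff_dvd _ 3).mp h

theorem Polynomial.isEisensteinAt_taylor_X_pow_three_sub_C {p : ℤ} (hp : ¬ (9 : ℤ) ∣ p ^ 3 - p) :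
    (taylor p (X ^ 3 - C p)).IsEisensteinAt (span {3}) := by
  have hdeg : (taylor p (X ^ 3 - C p)).natDegree = 3 := by
    rw [natDegree_taylor, natDegree_X_pow_sub_C]
  refine Monic.isEisensteinAt_of_mem_of_notMem ?_ ?_ (fun {n} hn => ?_) ?_
  · exact (monic_X_pow_sub_C _ three_ne_zero).taylor _
  · rw [ne_eq, span_singleton_eq_top, Int.isUnit_iff]; norm_num
  · rw [hdeg] at hn
    rw [taylor_X_pow_three_sub_C, mem_span_singleton]
    interval_cases n <;>
      simp only [coeff_add, coeff_C_mul, coeff_X_pow, coeff_X, coeff_C] <;> norm_num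
    exact p.three_dvd_pow_three_sub_self
  · rw [taylor_X_pow_three_sub_C, span_singleton_pow, mem_span_singleton]
    simp only [coeff_add, coeff_C_mul, coeff_X_pow, coeff_X, coeff_C]
    norm_num
    exact hp

theorem ZMod.pow_three_eq_self_iff (x : ZMod 9) : x ^ 3 = x ↔ x = 0 ∨ x = 1 ∨ x = -1 := by
  revert x; decide

theorem Nat.Prime.not_nine_dvd_pow_three_sub_self {p : ℕ} (hp : p.Prime)
    (h9 : ¬((p : ZMod 9) = 1 ∨ (p : ZMod 9) = -1)) : ¬ (9 : ℤ) ∣ (p : ℤ) ^ 3 - p := by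
  intro hdvd
  have hcube : (p : ZMod 9) ^ 3 = p := by
    have h := (ZMod.intCast_zmod_eq_zero_iff_dvd ((p : ℤ) ^ 3 - p) 9).mpr (by exact_mod_cast hdvd)
    push_cast at h
    exact sub_eq_zero.mp h
  rcases (ZMod.pow_three_eq_self_iff _).mp hcube with h0 | h1
  · rcases hp.eq_one_or_self_of_dvd 9 ((ZMod.natCast_eq_zero_iff p 9).mp h0) with h | h
    · norm_num at h
    · exact (by norm_num : ¬ Nat.Prime 9) (h ▸ hp)
  · exact h9 h1

theorem Rat.pow_ne_prime {n p : ℕ} (hn : 2 ≤ n) (hp : p.Prime) (b : ℚ) : b ^ n ≠ p := by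
  have : Fact p.Prime := ⟨hp⟩
  intro hb
  have hval := congrArg (padicValRat p) hb
  rw [padicValRat.pow, padicValRat.self hp.one_lt] at hval
  have := Int.eq_one_of_mul_eq_one_right (by positivity) hval
  omega

theorem IntermediateField.finrank_adjoin_of_pow_eq_prime {L : Type*} [Field L] [Algebra ℚ L]
    {n p : ℕ} (hn : n.Prime) (hp : p.Prime) {α : L} (hα : α ^ n = p) :
    finrank ℚ ℚ⟮α⟯ = n := by
  have hmo : (X ^ n - C (p : ℚ)).Monic := monic_X_pow_sub_C _ hn.ne_zero
  have hroot : aeval α (X ^ n - C (p : ℚ)) = 0 := by simp [hα]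
  have hmin : minpoly ℚ α = X ^ n - C (p : ℚ) :=
    (minpoly.eq_of_irreducible_of_monic
      (X_pow_sub_C_irreducible_of_prime hn (Rat.pow_ne_prime hn.two_le hp)) hroot hmo).symm
  rw [adjoin.finrank ⟨_, hmo, by rwa [← aeval_def]⟩, hmin, natDegree_X_pow_sub_C]

theorem NumberField.ramificationIdx'_span_three_eq_three {K : Type*} [Field K] [NumberField K]
    (hK : finrank ℚ K = 3) {p : ℤ} (hp : ¬ (9 : ℤ) ∣ p ^ 3 - p) {a : 𝓞 K} (ha : a ^ 3 = p)
    {P : Ideal (𝓞 K)} [P.IsPrime] (h3P : (3 : 𝓞 K) ∈ P) :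
    ramificationIdx' (span {(3 : ℤ)}) P = 3 := by
  have hmax : (span {(3 : ℤ)}).IsMaximal := by
    have : Fact (Nat.Prime 3) := ⟨Nat.prime_three⟩
    exact_mod_cast Int.ideal_span_isMaximal_of_prime 3
  have hroot : aeval (a - p) (taylor p (X ^ 3 - C p)) = 0 := by
    simp [taylor_apply, ha]
  have hmem := (isEisensteinAt_taylor_X_pow_three_sub_C hp).algebraMap_mem_pow_natDegree hmax
    ((monic_X_pow_sub_C _ three_ne_zero).taylor _) hroot
    (by simpa using h3P)
  rw [natDegree_taylor, natDegree_X_pow_sub_C, ← hK] at hmem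
  rw [← hK]
  exact_mod_cast ramificationIdx'_eq_finrank Nat.prime_three ‹P.IsPrime›.ne_top (by simpa using hmem)

theorem stmt_4_general (p : ℕ) (hp : p.Prime)
    (h9 : ¬((p : ZMod 9) = 1 ∨ (p : ZMod 9) = -1))
    (K : IntermediateField ℚ ℝ) (hK : K = ℚ⟮(p : ℝ) ^ ((1 : ℝ) / 3)⟯) :
    ∀ P : Ideal (𝓞 K), P.IsPrime → P ≠ ⊥ → (3 : 𝓞 K) ∈ P →
      Ideal.ramificationIdx' (Ideal.span {(3 : ℤ)}) P = 3 := by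
  intro P hP _ h3P
  subst hK
  set α : ℝ := (p : ℝ) ^ ((1 : ℝ) / 3)
  have hα : α ^ 3 = p := by
    rw [← Real.rpow_natCast, ← Real.rpow_mul (Nat.cast_nonneg p)]
    norm_num
  have hrank : finrank ℚ ℚ⟮α⟯ = 3 := finrank_adjoin_of_pow_eq_prime Nat.prime_three hp hα
  have : NumberField ℚ⟮α⟯ := { to_finiteDimensional := Module.finite_of_finrank_eq_succ hrank }
  have hgen : AdjoinSimple.gen ℚ α ^ 3 = p := Subtype.ext (by simpa using hα)
  let a : 𝓞 ℚ⟮α⟯ := ⟨_, IsIntegral.of_pow three_pos (hgen ▸ isIntegral_natCast p)⟩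
  have ha : a ^ 3 = ((p : ℤ) : 𝓞 ℚ⟮α⟯) := by
    apply RingOfIntegers.coe_injective
    push_cast
    exact hgen
  exact ramificationIdx'_span_three_eq_three hrank (hp.not_nine_dvd_pow_three_sub_self h9) ha h3P

/-- For a prime `p ≠ 3` with `p ≢ ±1 (mod 9)`, the prime `3` is totally ramified in
`ℚ(∛p)`: every nonzero prime of the ring of integers above `3` has ramification index `3`. -/
theorem stmt_4 (p : ℕ) (hp : p.Prime) (hp3 : p ≠ 3)
    (h9 : ¬((p : ZMod 9) = 1 ∨ (p : ZMod 9) = -1))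
    (K : IntermediateField ℚ ℝ) (hK : K = ℚ⟮(p : ℝ) ^ ((1 : ℝ) / 3)⟯) :
    ∀ P : Ideal (𝓞 K), P.IsPrime → P ≠ ⊥ → (3 : 𝓞 K) ∈ P →
      Ideal.ramificationIdx' (Ideal.span {(3 : ℤ)}) P = 3 :=
  stmt_4_general p hp h9 K hK
end

section
/- Let x³ − p be the minimal polynomial defining E = K(∛p) over a number field K containing ∛(pq) for distinct primes p, q ≠ 3. Then the relative discriminant ideal of E/K divides (27) in O_K; in particular, only primes of K above 3 can ramify in E. -/
open NumberField Polynomial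

/-!
If `x` generates `E/K` and `x³ = r` with `r ∈ 𝓞 K`, then `f'(x) = 3x²` lies in the different `𝔡`,
so `(3x²)³ = 27r² ∈ 𝔡³`. Besides `α = ∛p`, the element `β = γ/α = ∛q` also generates `E/K`;
as `p²` and `q²` are coprime, `27 ∈ 𝔡³`. Taking norms, `N(𝔡)³ ∣ (27)^[E:K] ∣ (27)³`, hence
`N(𝔡) ∣ (27)`; and a ramified prime divides `𝔡`, hence contains `27` and so `3`.
-/

section Different

variable (A K L : Type*) {B : Type*} [CommRing A] [Field K] [CommRing B] [Field L]
  [Algebra A K] [Algebra B L] [Algebra A B] [Algebra K L] [Algebra A L]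
  [IsScalarTower A K L] [IsScalarTower A B L] [IsDomain A] [IsFractionRing A K]
  [FiniteDimensional K L] [Algebra.IsSeparable K L] [IsIntegralClosure B A L]
  [IsIntegrallyClosed A] [IsDedekindDomain B] [Module.IsTorsionFree A B]

theorem aeval_derivative_mem_differentIdeal_of_aeval_eq_zero {x : B}
    (hx : Algebra.adjoin K {algebraMap B L x} = ⊤) {f : A[X]} (hf : aeval x f = 0) :
    aeval x (derivative f) ∈ differentIdeal A B := by
  obtain ⟨g, rfl⟩ := minpoly.isIntegrallyClosed_dvd (IsIntegralClosure.isIntegral A L x) hf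
  rw [derivative_mul, map_add, map_mul, map_mul, minpoly.aeval, zero_mul, add_zero]
  exact Ideal.mul_mem_right _ _ (aeval_derivative_mem_differentIdeal A K L x hx)

theorem natCast_mul_pow_pred_mem_differentIdeal {x : B}
    (hx : Algebra.adjoin K {algebraMap B L x} = ⊤) {n : ℕ} {r : A}
    (hr : x ^ n = algebraMap A B r) :
    (n : B) * x ^ (n - 1) ∈ differentIdeal A B := by
  have h := aeval_derivative_mem_differentIdeal_of_aeval_eq_zero A K L hx
    (f := X ^ n - C r) (by simp [hr])
  rwa [derivative_sub, derivative_X_pow, derivative_C, sub_zero, map_mul, aeval_C, map_natCast,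
    map_pow, aeval_X] at h

theorem mul_pow_mem_differentIdeal_pow_three {x : B}
    (hx : Algebra.adjoin K {algebraMap B L x} = ⊤) {r : A}
    (hr : x ^ 3 = algebraMap A B r) :
    27 * algebraMap A B r ^ 2 ∈ differentIdeal A B ^ 3 := by
  have h := Ideal.pow_mem_pow (natCast_mul_pow_pred_mem_differentIdeal A K L hx hr) 3
  rw [← hr]
  convert h using 1
  push_cast
  ring

end Different

theorem Ideal.relNorm_dvd_of_pow_dvd_map {R S : Type*} [CommRing R] [CommRing S]
    [IsDedekindDomain R] [IsDedekindDomain S] [Algebra R S] [Module.Finite R S]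
    [Module.IsTorsionFree R S] {I : Ideal S} {J : Ideal R} {n : ℕ} (hn : n ≠ 0)
    (hrank : Module.finrank R S ≤ n) (h : I ^ n ∣ J.map (algebraMap R S)) :
    Ideal.relNorm R I ∣ J := by
  rw [← UniqueFactorizationMonoid.pow_dvd_pow_iff_dvd hn, ← map_pow]
  calc Ideal.relNorm R (I ^ n) ∣ Ideal.relNorm R (J.map (algebraMap R S)) := map_dvd _ h
    _ = J ^ Module.finrank R S := Ideal.relNorm_algebraMap S J
    _ ∣ J ^ n := pow_dvd_pow J hrank

theorem Ideal.mem_of_mul_mem_of_isCoprime {R : Type*} [CommRing R] {I : Ideal R} {a u v : R}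
    (huv : IsCoprime u v) (hu : a * u ∈ I) (hv : a * v ∈ I) : a ∈ I := by
  obtain ⟨s, t, hst⟩ := huv
  rw [← mul_one a, ← hst, mul_add, mul_left_comm, mul_left_comm a t]
  exact I.add_mem (I.mul_mem_left s hu) (I.mul_mem_left t hv)

attribute [local instance] FractionRing.liftAlgebra in
theorem Ideal.dvd_differentIdeal_of_one_lt_ramificationIdx' {A B : Type*} [CommRing A]
    [CommRing B] [Algebra A B] [IsDedekindDomain A] [IsDedekindDomain B]
    [Module.IsTorsionFree A B] [Module.Finite A B]
    [Algebra.IsSeparable (FractionRing A) (FractionRing B)] {P : Ideal B} [P.IsPrime]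
    (hP : P ≠ ⊥) (hram : 1 < Ideal.ramificationIdx' (P.comap (algebraMap A B)) P) :
    P ∣ differentIdeal A B := by
  have hp : P.comap (algebraMap A B) ≠ ⊥ := mt Ideal.eq_bot_of_comap_eq_bot hP
  have : (P.comap (algebraMap A B)).IsMaximal := Ideal.IsPrime.isMaximal inferInstance hp
  simpa using pow_sub_one_dvd_differentIdeal A P 2 hp
    (Ideal.dvd_iff_le.mpr (Ideal.le_pow_of_le_ramificationIdx' hram))

theorem Module.finrank_le_natDegree_of_adjoin_eq_top {K E : Type*} [Field K] [Field E]
    [Algebra K E] {x : E} (hx : Algebra.adjoin K {x} = ⊤) {f : K[X]} (hf0 : f ≠ 0)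
    (hf : aeval x f = 0) : Module.finrank K E ≤ f.natDegree := by
  have hint : IsIntegral K x := IsAlgebraic.isIntegral ⟨f, hf0, hf⟩
  rw [(PowerBasis.ofAdjoinEqTop' hint hx).finrank, PowerBasis.ofAdjoinEqTop'_dim]
  exact natDegree_le_of_dvd (minpoly.dvd K x hf) hf0

theorem Algebra.adjoin_div_eq_adjoin {K E : Type*} [Field K] [Field E] [Algebra K E]
    [Algebra.IsAlgebraic K E] {c : K} (hc : c ≠ 0) (x : E) :
    Algebra.adjoin K {algebraMap K E c / x} = Algebra.adjoin K {x} := by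
  have hdiv_mem (y : E) : algebraMap K E c / y ∈ Algebra.adjoin K {y} := by
    rw [div_eq_mul_inv]
    exact Subalgebra.mul_mem _ (Subalgebra.algebraMap_mem _ c)
      (Algebra.IsIntegral.isIntegral y).inv_mem_adjoin
  refine le_antisymm (Algebra.adjoin_singleton_le (hdiv_mem x)) (Algebra.adjoin_singleton_le ?_)
  simpa only [div_div_cancel₀ ((_root_.map_ne_zero _).mpr hc)] using
    hdiv_mem (algebraMap K E c / x)

theorem NumberField.RingOfIntegers.exists_pow_eq_natCast {E : Type*} [Field E] [NumberField E]
    {x : E} {n m : ℕ} (hn : n ≠ 0) (hx : x ^ n = m) :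
    ∃ y : 𝓞 E, algebraMap (𝓞 E) E y = x ∧ y ^ n = m := by
  have hint : IsIntegral ℤ x :=
    IsIntegral.of_pow (Nat.pos_of_ne_zero hn) (hx ▸ isIntegral_natCast m)
  refine ⟨⟨x, hint⟩, rfl, RingOfIntegers.ext ?_⟩
  push_cast
  exact hx

theorem stmt_18_general (p q : ℕ) (hp : p.Prime) (hq : q.Prime) (hpq : p ≠ q)
    (K E : Type*) [Field K] [NumberField K] [Field E] [NumberField E] [Algebra K E]
    (γ : K) (hγ : γ ^ 3 = ((p * q : ℕ) : K))
    (α : E) (hα : α ^ 3 = (p : E)) (hgen : Algebra.adjoin K {α} = ⊤) :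
    Ideal.spanNorm (𝓞 K) (differentIdeal (𝓞 K) (𝓞 E)) ∣ Ideal.span {(27 : 𝓞 K)} ∧
      ∀ P : Ideal (𝓞 E), P.IsPrime → P ≠ ⊥ →
        1 < Ideal.ramificationIdx'
            (P.comap (algebraMap (𝓞 K) (𝓞 E))) P →
          (3 : 𝓞 K) ∈ P.comap (algebraMap (𝓞 K) (𝓞 E)) := by
  have hα0 : α ≠ 0 := by rintro rfl; simp [hp.ne_zero, eq_comm] at hα
  set β := algebraMap K E γ / α
  have hβ : β ^ 3 = (q : E) := by
    have hp0 : (p : E) ≠ 0 := by exact_mod_cast hp.ne_zero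
    rw [div_pow, ← map_pow, hγ, hα]; push_cast; field_simp
  have hβgen : Algebra.adjoin K {β} = ⊤ := by
    refine (Algebra.adjoin_div_eq_adjoin ?_ α).trans hgen
    rintro rfl; simp [hp.ne_zero, hq.ne_zero] at hγ
  obtain ⟨a, rfl, ha⟩ := RingOfIntegers.exists_pow_eq_natCast three_ne_zero hα
  obtain ⟨b, hb, hb3⟩ := RingOfIntegers.exists_pow_eq_natCast three_ne_zero hβ
  set d := differentIdeal (𝓞 K) (𝓞 E)
  have h27 : (27 : 𝓞 E) ∈ d ^ 3 := by
    have hpq' : IsCoprime ((p : 𝓞 E) ^ 2) ((q : 𝓞 E) ^ 2) := by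
      simpa using (Nat.isCoprime_iff_coprime.mpr ((Nat.coprime_primes hp hq).mpr hpq)).pow.map
        (algebraMap ℤ (𝓞 E))
    refine Ideal.mem_of_mul_mem_of_isCoprime hpq' ?_ ?_
    · simpa using mul_pow_mem_differentIdeal_pow_three (𝓞 K) K E hgen (r := p) (by simpa using ha)
    · simpa using mul_pow_mem_differentIdeal_pow_three (𝓞 K) K E (hb ▸ hβgen) (r := q)
        (by simpa using hb3)
  refine ⟨?_, fun P hP hPbot hram ↦ ?_⟩
  · have hrank : Module.finrank (𝓞 K) (𝓞 E) ≤ 3 := by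
      rw [← IsFractionRing.finrank_eq (𝓞 K) K (𝓞 E) E,
        ← natDegree_X_pow_sub_C (n := 3) (r := (p : K))]
      exact Module.finrank_le_natDegree_of_adjoin_eq_top hgen (X_pow_sub_C_ne_zero three_pos _)
        (by simp [hα])
    refine Ideal.relNorm_dvd_of_pow_dvd_map three_ne_zero hrank ?_
    rwa [Ideal.map_span, Set.image_singleton, map_ofNat, Ideal.dvd_span_singleton]
  · have h27P : (27 : 𝓞 E) ∈ P := Ideal.dvd_iff_le.mp
      (Ideal.dvd_differentIdeal_of_one_lt_ramificationIdx' hPbot hram)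
      (Ideal.pow_le_self three_ne_zero h27)
    rw [Ideal.mem_comap, map_ofNat]
    exact hP.mem_of_pow_mem 3 (by norm_num [h27P])

/-- Let `K` be a number field containing a cube root of `pq` (for distinct primes
`p, q ≠ 3`) and let `E = K(∛p)` be defined by `x³ - p`. Then the relative discriminant
ideal of `E/K` (the norm of the different ideal) divides `(27)` in `𝓞 K`; in particular
only primes of `K` above `3` can ramify in `E`. -/
theorem stmt_18 (p q : ℕ) (hp : p.Prime) (hq : q.Prime) (hpq : p ≠ q)
    (hp3 : p ≠ 3) (hq3 : q ≠ 3)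
    (K E : Type*) [Field K] [NumberField K] [Field E] [NumberField E] [Algebra K E]
    (γ : K) (hγ : γ ^ 3 = ((p * q : ℕ) : K))
    (α : E) (hα : α ^ 3 = (p : E)) (hgen : Algebra.adjoin K {α} = ⊤) :
    Ideal.spanNorm (𝓞 K) (differentIdeal (𝓞 K) (𝓞 E)) ∣ Ideal.span {(27 : 𝓞 K)} ∧
      ∀ P : Ideal (𝓞 E), P.IsPrime → P ≠ ⊥ →
        1 < Ideal.ramificationIdx'
            (P.comap (algebraMap (𝓞 K) (𝓞 E))) P →
          (3 : 𝓞 K) ∈ P.comap (algebraMap (𝓞 K) (𝓞 E)) :=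
  stmt_18_general p q hp hq hpq K E γ hγ α hα hgen
end
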